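/- arXiv:2202.09399 — 2 statements merged into one kernel-verified Lean document; each statement's English description precedes it below -/
import Mathlib

section
/- Let E be a finite effect algebra with (pairwise distinct) atoms a_1,…,a_m, and let A = (y_{it}) ∈ M(E) be an n×m matrix whose rows enumerate Seq(E). If x ∈ E can be written as x = k_1 a_1 ⊕ … ⊕ k_m a_m (with k_1,…,k_m ∈ ℕ, the orthosum being defined), then there exists an index i with 1 ≤ i ≤ n such that k_t ≤ y_{it} for all 1 ≤ t ≤ m. -/
/-- An effect algebra: a set with 0, 1 and a partially defined binary
operation `⊕`, modeled as an `Option`-valued operation. -/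
structure EffectAlgebra (E : Type*) where
  oplus : E → E → Option E
  zero : E
  one : E
  comm : ∀ p q, oplus p q = oplus q p
  assoc : ∀ p q r s qr, oplus q r = some qr → oplus p qr = some s →
    ∃ pq, oplus p q = some pq ∧ oplus pq r = some s
  orthosupp : ∀ p, ∃! q, oplus p q = some one
  zero_unit : ∀ p q, oplus one p = some q → p = zero

namespace EffectAlgebra

variable {E : Type*}

/-- `p ≤ q` iff there is `r` with `p ⊕ r` defined and equal to `q`. -/
def le (W : EffectAlgebra E) (p q : E) : Prop := ∃ r, W.oplus p r = some q

/-- An atom is a minimal element of `E \ {0}`. -/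
def IsAtomElem (W : EffectAlgebra E) (x : E) : Prop :=
  x ≠ W.zero ∧ ∀ y : E, W.le y x → y ≠ W.zero → y = x

/-- Partial orthosum of a list of elements. -/
def listSum (W : EffectAlgebra E) : List E → Option E
  | [] => some W.zero
  | x :: xs => (listSum W xs).bind (fun y => W.oplus x y)

/-- The orthosum `k 0 • a 0 ⊕ ⋯ ⊕ k (m-1) • a (m-1)`, when defined. -/
def mulSum (W : EffectAlgebra E) {m : ℕ} (a : Fin m → E) (k : Fin m → ℕ) : Option E :=
  W.listSum ((List.ofFn (fun t => List.replicate (k t) (a t))).flatten)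

/-- `Seq(E)`: tuples `k` with `⨁ k t • a t` defined and equal to `1`. -/
def SeqSet (W : EffectAlgebra E) {m : ℕ} (a : Fin m → E) : Set (Fin m → ℕ) :=
  {k | W.mulSum a k = some W.one}

/-- `a : Fin m → E` enumerates the atoms of `E` without repetition. -/
def AtomFamily (W : EffectAlgebra E) {m : ℕ} (a : Fin m → E) : Prop :=
  Function.Injective a ∧ (∀ t, W.IsAtomElem (a t)) ∧
    ∀ x : E, W.IsAtomElem x → ∃ t, x = a t

/-- `A ∈ M(E)`: the rows of `A` are pairwise distinct and enumerate `Seq(E)`. -/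
def MemM (W : EffectAlgebra E) {m n : ℕ} (a : Fin m → E) (A : Matrix (Fin n) (Fin m) ℕ) : Prop :=
  (∀ i j : Fin n, i ≠ j → ∃ t, A i t ≠ A j t) ∧
    {k : Fin m → ℕ | ∃ i, A i = k} = W.SeqSet a

/-- A state on an effect algebra. -/
def IsState (W : EffectAlgebra E) (s : E → ℝ) : Prop :=
  (∀ x, 0 ≤ s x ∧ s x ≤ 1) ∧ s W.one = 1 ∧
    ∀ p q r, W.oplus p q = some r → s p + s q ≤ 1 ∧ s r = s p + s q

end EffectAlgebra

/-- `(A|1)`: the matrix `A` augmented by a column of ones. -/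
def augmentOnes {n m : ℕ} {R : Type*} [One R] (A : Matrix (Fin n) (Fin m) R) :
    Matrix (Fin n) (Fin (m + 1)) R :=
  Matrix.of fun i j => if h : (j : ℕ) < m then A i ⟨j, h⟩ else 1


namespace EffectAlgebra

variable {E : Type*} (W : EffectAlgebra E)

lemma one_zero : W.oplus W.one W.zero = some W.one := by
  obtain ⟨q, hq, -⟩ := W.orthosupp W.one
  have h := W.zero_unit q W.one hq
  rwa [h] at hq

lemma assoc' {p q pq r s : E} (h1 : W.oplus p q = some pq) (h2 : W.oplus pq r = some s) :
    ∃ qr, W.oplus q r = some qr ∧ W.oplus p qr = some s := by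
  have h1' : W.oplus q p = some pq := by rw [W.comm]; exact h1
  have h2' : W.oplus r pq = some s := by rw [W.comm]; exact h2
  obtain ⟨rq, hrq, hrqp⟩ := W.assoc r q p s pq h1' h2'
  exact ⟨rq, by rw [W.comm]; exact hrq, by rw [W.comm]; exact hrqp⟩

lemma zero_oplus (v : E) : W.oplus W.zero v = some v := by
  obtain ⟨v', hv', -⟩ := W.orthosupp v
  have h1 : W.oplus W.zero W.one = some W.one := by rw [W.comm]; exact W.one_zero
  obtain ⟨pq, hpq, hpq1⟩ := W.assoc W.zero v v' W.one W.one hv' h1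
  obtain ⟨u, hu, huniq⟩ := W.orthosupp v'
  have e1 : W.oplus v' pq = some W.one := by rw [W.comm]; exact hpq1
  have e2 : W.oplus v' v = some W.one := by rw [W.comm]; exact hv'
  have h := (huniq pq e1).trans (huniq v e2).symm
  rw [h] at hpq; exact hpq

lemma oplus_zero (v : E) : W.oplus v W.zero = some v := by
  rw [W.comm]; exact W.zero_oplus v

lemma cancel {x b c d : E} (h1 : W.oplus x b = some d) (h2 : W.oplus x c = some d) : b = c := by
  obtain ⟨t, ht, -⟩ := W.orthosupp d
  have h1' : W.oplus b x = some d := by rw [W.comm]; exact h1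
  have h2' : W.oplus c x = some d := by rw [W.comm]; exact h2
  obtain ⟨xt, hxt, hbxt⟩ := W.assoc' h1' ht
  obtain ⟨xt2, hxt2, hcxt⟩ := W.assoc' h2' ht
  rw [hxt] at hxt2
  obtain rfl : xt = xt2 := by injection hxt2
  obtain ⟨u, hu, huniq⟩ := W.orthosupp xt
  have eb : b = u := huniq b (show W.oplus xt b = some W.one by rw [W.comm]; exact hbxt)
  have ec : c = u := huniq c (show W.oplus xt c = some W.one by rw [W.comm]; exact hcxt)
  exact eb.trans ec.symm

lemma eq_zero_of_oplus_eq_zero {r s : E} (h : W.oplus r s = some W.zero) :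
    r = W.zero ∧ s = W.zero := by
  have h01 : W.oplus W.zero W.one = some W.one := by rw [W.comm]; exact W.one_zero
  obtain ⟨u, hu, hru⟩ := W.assoc' h h01
  have hs : s = W.zero := W.zero_unit s u (by rw [W.comm]; exact hu)
  subst hs
  rw [h01] at hu
  obtain rfl : W.one = u := by injection hu
  exact ⟨W.zero_unit r W.one (by rw [W.comm]; exact hru), rfl⟩

lemma le_refl' (x : E) : W.le x x := ⟨W.zero, W.oplus_zero x⟩

lemma le_trans' {x y z : E} (h1 : W.le x y) (h2 : W.le y z) : W.le x z := by
  obtain ⟨r, hr⟩ := h1; obtain ⟨s, hs⟩ := h2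
  obtain ⟨rs, _, hx⟩ := W.assoc' hr hs
  exact ⟨rs, hx⟩

lemma le_antisymm' {x y : E} (h1 : W.le x y) (h2 : W.le y x) : x = y := by
  obtain ⟨r, hr⟩ := h1; obtain ⟨s, hs⟩ := h2
  obtain ⟨rs, hrs, hx⟩ := W.assoc' hr hs
  have h0 : rs = W.zero := W.cancel hx (W.oplus_zero x)
  subst h0
  obtain ⟨hr0, -⟩ := W.eq_zero_of_oplus_eq_zero hrs
  subst hr0
  rw [W.oplus_zero] at hr
  injection hr

lemma listSum_append {l1 l2 : List E} {u v w : E}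
    (h1 : W.listSum l1 = some u) (h2 : W.listSum l2 = some v)
    (h : W.oplus u v = some w) : W.listSum (l1 ++ l2) = some w := by
  induction l1 generalizing u w with
  | nil =>
      rw [listSum] at h1
      obtain rfl : W.zero = u := by injection h1
      rw [W.zero_oplus] at h
      obtain rfl : v = w := by injection h
      simpa using h2
  | cons x l ih =>
      rw [listSum] at h1
      cases hl : W.listSum l with
      | none => rw [hl] at h1; simp at h1
      | some u1 =>
          rw [hl] at h1; simp only [Option.bind_some] at h1
          obtain ⟨u1v, h3, h4⟩ := W.assoc' h1 h
          have hres := ih hl h3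
          rw [List.cons_append, listSum, hres]
          simpa using h4

lemma swap_bind (x y u : E) :
    (W.oplus x u).bind (W.oplus y) = (W.oplus y u).bind (W.oplus x) := by
  have key : ∀ a b s, ((W.oplus a u).bind (W.oplus b) = some s) →
      (W.oplus b u).bind (W.oplus a) = some s := by
    intro a b s h
    cases hau : W.oplus a u with
    | none => rw [hau] at h; simp at h
    | some v =>
        rw [hau] at h; simp only [Option.bind_some] at h
        obtain ⟨ba, hba, hbau⟩ := W.assoc b a u s v hau h
        have hab : W.oplus a b = some ba := by rw [W.comm]; exact hba
        obtain ⟨bu, hbu, habu⟩ := W.assoc' hab hbau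
        rw [hbu]; simpa using habu
  cases h1 : (W.oplus x u).bind (W.oplus y) with
  | some s => exact (key x y s h1).symm
  | none =>
      cases h2 : (W.oplus y u).bind (W.oplus x) with
      | none => rfl
      | some s => exact absurd (h1.symm.trans (key y x s h2)) (by simp)

lemma listSum_perm {l1 l2 : List E} (h : l1.Perm l2) : W.listSum l1 = W.listSum l2 := by
  induction h with
  | nil => rfl
  | cons x _ ih => rw [listSum, listSum, ih]
  | swap x y l =>
      rw [listSum, listSum, listSum, listSum]
      cases hl : W.listSum l with
      | none => rfl
      | some u => simp only [Option.bind_some]; exact (W.swap_bind y x u).symm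
  | trans _ _ ih1 ih2 => rw [ih1, ih2]

lemma count_mulSum_list [DecidableEq E] {m : ℕ} (a : Fin m → E) (k : Fin m → ℕ) (b : E) :
    ((List.ofFn (fun t => List.replicate (k t) (a t))).flatten).count b
      = ∑ t, if a t = b then k t else 0 := by
  rw [List.count_flatten, List.map_ofFn, List.sum_ofFn]
  refine Finset.sum_congr rfl fun t _ => ?_
  simp [List.count_replicate, beq_iff_eq]

lemma mulSum_add {m : ℕ} {a : Fin m → E} {k k' : Fin m → ℕ} {u v w : E}
    (h1 : W.mulSum a k = some u) (h2 : W.mulSum a k' = some v)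
    (h : W.oplus u v = some w) : W.mulSum a (k + k') = some w := by
  classical
  have hperm : ((List.ofFn (fun t => List.replicate ((k + k') t) (a t))).flatten).Perm
      (((List.ofFn (fun t => List.replicate (k t) (a t))).flatten) ++
       ((List.ofFn (fun t => List.replicate (k' t) (a t))).flatten)) := by
    rw [List.perm_iff_count]
    intro b
    rw [List.count_append, count_mulSum_list, count_mulSum_list, count_mulSum_list,
      ← Finset.sum_add_distrib]
    refine Finset.sum_congr rfl fun t _ => ?_
    by_cases hb : a t = b <;> simp [hb, Pi.add_apply]
  rw [mulSum, W.listSum_perm hperm]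
  exact W.listSum_append h1 h2 h

lemma mulSum_zero {m : ℕ} (a : Fin m → E) : W.mulSum a 0 = some W.zero := by
  have h : (List.ofFn (fun t : Fin m => List.replicate ((0 : Fin m → ℕ) t) (a t))).flatten = [] := by
    simp
  rw [mulSum, h, listSum]

lemma mulSum_single {m : ℕ} (a : Fin m → E) (t : Fin m) :
    W.mulSum a (Pi.single t 1) = some (a t) := by
  classical
  have hperm : ((List.ofFn (fun s => List.replicate ((Pi.single t 1 : Fin m → ℕ) s) (a s))).flatten).Perm
      [a t] := by
    rw [List.perm_iff_count]
    intro b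
    rw [count_mulSum_list]
    rw [Finset.sum_eq_single t]
    · rw [Pi.single_eq_same, List.count_singleton']
    · intro s _ hs; simp [Pi.single_eq_of_ne hs]
    · simp
  rw [mulSum, W.listSum_perm hperm, listSum, listSum]
  simp only [Option.bind_some]
  rw [W.comm]
  exact W.zero_oplus (a t)

lemma exists_mulSum [Fintype E] {m : ℕ} {a : Fin m → E} (ha : W.AtomFamily a) (x : E) :
    ∃ k, W.mulSum a k = some x := by
  classical
  set c : E → ℕ := fun z => (Finset.univ.filter (fun y => W.le y z)).card with hc
  have hstrict : ∀ {y z : E}, W.le y z → y ≠ z → c y < c z := by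
    intro y z h hne
    apply Finset.card_lt_card
    constructor
    · intro w hw
      rw [Finset.mem_filter] at hw ⊢
      exact ⟨Finset.mem_univ w, W.le_trans' hw.2 h⟩
    · intro hzz
      have hz : z ∈ Finset.univ.filter (fun y => W.le y z) := by
        rw [Finset.mem_filter]; exact ⟨Finset.mem_univ z, W.le_refl' z⟩
      have := hzz hz
      rw [Finset.mem_filter] at this
      exact hne (W.le_antisymm' h this.2)
  suffices H : ∀ N (x : E), c x ≤ N → ∃ k, W.mulSum a k = some x from H (c x) x le_rfl
  intro N
  induction N with
  | zero =>
      intro x hx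
      exfalso
      have hxm : x ∈ Finset.univ.filter (fun y => W.le y x) := by
        rw [Finset.mem_filter]; exact ⟨Finset.mem_univ x, W.le_refl' x⟩
      have hp := Finset.card_pos.mpr ⟨x, hxm⟩
      simp only [hc] at hx
      omega
  | succ N ih =>
      intro x hx
      by_cases h0 : x = W.zero
      · exact ⟨0, h0 ▸ W.mulSum_zero a⟩
      · set S := Finset.univ.filter (fun z => z ≠ W.zero ∧ W.le z x) with hS
        have hxS : x ∈ S := by
          rw [hS, Finset.mem_filter]; exact ⟨Finset.mem_univ x, h0, W.le_refl' x⟩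
        obtain ⟨z, hzS, hmin⟩ := S.exists_min_image c ⟨x, hxS⟩
        rw [hS, Finset.mem_filter] at hzS
        have hzatom : W.IsAtomElem z := by
          refine ⟨hzS.2.1, fun y hyz hy0 => ?_⟩
          have hyx := W.le_trans' hyz hzS.2.2
          have hyS : y ∈ S := by
            rw [hS, Finset.mem_filter]; exact ⟨Finset.mem_univ y, hy0, hyx⟩
          by_contra hne
          exact absurd (hmin y hyS) (not_le.mpr (hstrict hyz hne))
        obtain ⟨t, ht⟩ := ha.2.2 z hzatom
        obtain ⟨w, hw⟩ := hzS.2.2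
        have hwne : w ≠ x := by
          intro he; subst he
          have h1 : W.oplus w z = some w := by rw [W.comm]; exact hw
          have h2 : W.oplus w W.zero = some w := W.oplus_zero w
          exact hzS.2.1 (W.cancel h1 h2)
        have hwx : W.le w x := ⟨z, by rw [W.comm]; exact hw⟩
        have hcw : c w ≤ N := by
          have := hstrict hwx hwne; omega
        obtain ⟨k', hk'⟩ := ih w hcw
        refine ⟨k' + Pi.single t 1, W.mulSum_add hk' (W.mulSum_single a t) ?_⟩
        rw [← ht, W.comm]; exact hw

end EffectAlgebra

/-- Lemma 7 (`k<y`): if `x = ⨁ k t • a t` then some row of `A ∈ M(E)`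
dominates `k` componentwise. -/
theorem matrix_row_dominates {E : Type*} [Fintype E] (W : EffectAlgebra E)
    {m n : ℕ} (a : Fin m → E) (ha : W.AtomFamily a)
    (A : Matrix (Fin n) (Fin m) ℕ) (hA : W.MemM a A)
    (x : E) (k : Fin m → ℕ) (hx : W.mulSum a k = some x) :
    ∃ i : Fin n, ∀ t : Fin m, k t ≤ A i t := by
  obtain ⟨x', hx', -⟩ := W.orthosupp x
  obtain ⟨k', hk'⟩ := W.exists_mulSum ha x'
  have hone := W.mulSum_add hx hk' hx'
  have hmem : (k + k') ∈ W.SeqSet a := hone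
  rw [← hA.2] at hmem
  obtain ⟨i, hi⟩ := hmem
  exact ⟨i, fun t => by rw [hi]; exact Nat.le_add_right _ _⟩
end

section
/- Let E be a finite effect algebra with (pairwise distinct) atoms a_1,…,a_m and let A = (y_{it}) ∈ M(E) be an n×m matrix whose rows enumerate Seq(E). If E has a state h, then the nonnegative real numbers s_t = h(a_t) (1 ≤ t ≤ m) satisfy A·(s_1,…,s_m)ᵀ = (1,…,1)ᵀ, i.e. Σ_{t=1}^m y_{it} h(a_t) = 1 for every 1 ≤ i ≤ n; consequently rank A = rank (A|1). -/
namespace EffectAlgebra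

variable {E : Type*} {W : EffectAlgebra E} {s : E → ℝ}

theorem IsState.map_zero (hs : W.IsState s) : s W.zero = 0 := by
  obtain ⟨z, hz, -⟩ := W.orthosupp W.one
  obtain rfl : z = W.zero := W.zero_unit _ _ hz
  linarith [(hs.2.2 _ _ _ hz).2]

theorem IsState.map_listSum (hs : W.IsState s) :
    ∀ {l : List E} {x : E}, W.listSum l = some x → s x = (l.map s).sum
  | [], x, hx => by
    obtain rfl : W.zero = x := Option.some.inj hx
    simp [hs.map_zero]
  | e :: l, x, hx => by
    obtain ⟨y, hy, hexy⟩ := Option.bind_eq_some_iff.mp hx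
    rw [(hs.2.2 _ _ _ hexy).2, hs.map_listSum hy, List.map_cons, List.sum_cons]

theorem IsState.map_mulSum (hs : W.IsState s) {m : ℕ} {a : Fin m → E} {k : Fin m → ℕ} {x : E}
    (hx : W.mulSum a k = some x) : s x = ∑ t, (k t : ℝ) * s (a t) := by
  simp [hs.map_listSum hx, List.map_flatten, List.sum_flatten, List.map_ofFn, List.sum_ofFn,
    Function.comp_def]

theorem IsState.sum_mul_eq_one_of_mem_seqSet (hs : W.IsState s) {m : ℕ} {a : Fin m → E}
    {k : Fin m → ℕ} (hk : k ∈ W.SeqSet a) : ∑ t, (k t : ℝ) * s (a t) = 1 := by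
  rw [← hs.map_mulSum hk, hs.2.1]

theorem MemM.row_mem_seqSet {m n : ℕ} {a : Fin m → E} {A : Matrix (Fin n) (Fin m) ℕ}
    (hA : W.MemM a A) (i : Fin n) : A i ∈ W.SeqSet a :=
  hA.2 ▸ ⟨i, rfl⟩

end EffectAlgebra

namespace Matrix

variable {K : Type*} [Field K] {m n : Type*} [Fintype m] [Fintype n]

theorem exists_vecMul_eq_zero_of_notMem_range_mulVecLin (B : Matrix m n K) {v : m → K}
    (hv : v ∉ LinearMap.range B.mulVecLin) : ∃ c : m → K, c ᵥ* B = 0 ∧ c ⬝ᵥ v ≠ 0 := by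
  classical
  obtain ⟨f, hfv, hf⟩ := Submodule.exists_dual_map_eq_bot_of_notMem hv inferInstance
  set c : m → K := fun i => f (Pi.single i 1)
  have hfc : ∀ w, f w = c ⬝ᵥ w := fun w => by
    rw [LinearMap.pi_apply_eq_sum_univ f w, dotProduct]
    refine Finset.sum_congr rfl fun i _ => ?_
    rw [smul_eq_mul, mul_comm]
    congr 2
    ext j
    simp [Pi.single_apply, eq_comm]
  refine ⟨c, funext fun j => ?_, hfc v ▸ hfv⟩
  have hcol : f (B.col j) ∈ Submodule.map f (LinearMap.range B.mulVecLin) :=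
    Submodule.mem_map_of_mem ⟨Pi.single j 1, B.mulVec_single_one j⟩
  rw [hf, Submodule.mem_bot, hfc] at hcol
  simpa [vecMul, dotProduct, mul_comm] using hcol

theorem mem_range_mulVecLin_of_map_mulVec_eq {L : Type*} [Field L] [Algebra K L]
    (B : Matrix m n K) {v : m → K} {x : n → L}
    (hx : B.map (algebraMap K L) *ᵥ x = algebraMap K L ∘ v) :
    v ∈ LinearMap.range B.mulVecLin := by
  by_contra hv
  obtain ⟨c, hcB, hcv⟩ := B.exists_vecMul_eq_zero_of_notMem_range_mulVecLin hv
  apply hcv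
  apply (algebraMap K L).injective
  have hcB' : (algebraMap K L ∘ c) ᵥ* B.map (algebraMap K L) = 0 := by
    ext j
    rw [← RingHom.map_vecMul, hcB]
    simp
  rw [RingHom.map_dotProduct, ← hx, dotProduct_mulVec, hcB', zero_dotProduct, map_zero]

end Matrix

theorem range_col_augmentOnes {R : Type*} [One R] {n m : ℕ} (B : Matrix (Fin n) (Fin m) R) :
    Set.range (augmentOnes B).col = insert 1 (Set.range B.col) := by
  have hlast : (augmentOnes B).col (Fin.last m) = 1 := by
    ext i; simp [augmentOnes]
  have hcastSucc : ∀ t, (augmentOnes B).col t.castSucc = B.col t := fun t => by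
    ext i; simp [augmentOnes]
  ext w
  simp only [Set.mem_range, Set.mem_insert_iff, Fin.exists_fin_succ', hlast, hcastSucc]
  tauto

theorem rank_augmentOnes_eq_of_one_mem_range {K : Type*} [Field K] {n m : ℕ}
    (B : Matrix (Fin n) (Fin m) K) (hB : 1 ∈ LinearMap.range B.mulVecLin) :
    (augmentOnes B).rank = B.rank := by
  rw [Matrix.range_mulVecLin] at hB
  unfold Matrix.rank
  rw [Matrix.range_mulVecLin, Matrix.range_mulVecLin, range_col_augmentOnes,
    Submodule.span_insert_eq_span hB]

theorem solution_of_state_general {E : Type*} (W : EffectAlgebra E)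
    {m n : ℕ} (a : Fin m → E)
    (A : Matrix (Fin n) (Fin m) ℕ) (hA : W.MemM a A)
    (h : E → ℝ) (hh : W.IsState h) :
    (∀ t : Fin m, 0 ≤ h (a t)) ∧
      (∀ i : Fin n, ∑ t : Fin m, (A i t : ℝ) * h (a t) = 1) ∧
      (A.map (fun x : ℕ => (x : ℚ))).rank
        = (augmentOnes (A.map (fun x : ℕ => (x : ℚ)))).rank := by
  have hsol : ∀ i, ∑ t, (A i t : ℝ) * h (a t) = 1 := fun i =>
    hh.sum_mul_eq_one_of_mem_seqSet (hA.row_mem_seqSet i)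
  refine ⟨fun t => (hh.1 (a t)).1, hsol, (rank_augmentOnes_eq_of_one_mem_range _ ?_).symm⟩
  refine Matrix.mem_range_mulVecLin_of_map_mulVec_eq (L := ℝ) _ (x := fun t => h (a t)) ?_
  ext i
  simpa [Matrix.mulVec, dotProduct] using hsol i

/-- If `E` has a state `h`, then `s t = h (a t)` is a nonnegative solution of
`A·s = 1`; consequently `rank A = rank (A|1)`. -/
theorem solution_of_state {E : Type*} [Fintype E] (W : EffectAlgebra E)
    {m n : ℕ} (a : Fin m → E) (ha : W.AtomFamily a)
    (A : Matrix (Fin n) (Fin m) ℕ) (hA : W.MemM a A)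
    (h : E → ℝ) (hh : W.IsState h) :
    (∀ t : Fin m, 0 ≤ h (a t)) ∧
      (∀ i : Fin n, ∑ t : Fin m, (A i t : ℝ) * h (a t) = 1) ∧
      (A.map (fun x : ℕ => (x : ℚ))).rank
        = (augmentOnes (A.map (fun x : ℕ => (x : ℚ)))).rank :=
  solution_of_state_general W a A hA h hh
end
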